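/- Suppose x^{k+1} = Aᵏ xᵏ + Δᵏ where each Aᵏ is doubly stochastic with σ₂(Aᵏ) ≤ λ < 1, and Δᵏ → 0 as k → ∞. Then the deviation from the mean e^k = x^k − ((𝟏ᵀx^k)/n)𝟏 converges to 0. -/

import Mathlib

/-!
Row sums one make `Aᵏ` fix constant vectors and column sums one make it preserve the sum of the
entries, so `Aᵏ` commutes with subtracting the mean and the deviation satisfies
`e^{k+1} = Aᵏ eᵏ + (Δᵏ minus its mean)`. Since `eᵏ` has mean zero, `‖Aᵏ eᵏ‖ ≤ σ₂(Aᵏ) ‖eᵏ‖ ≤ λ ‖eᵏ‖`,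
and a nonnegative sequence with `a (k+1) ≤ λ a k + b k`, `λ < 1`, `b → 0`, tends to zero.
-/

open Filter

/-- Euclidean norm of a vector in ℝⁿ. -/
noncomputable def l2norm {n : ℕ} (v : Fin n → ℝ) : ℝ := Real.sqrt (∑ i, v i ^ 2)

/-- The second-largest singular value of a doubly stochastic matrix: the operator norm of
`A` restricted to the subspace orthogonal to the all-ones vector. -/
noncomputable def sigma2 {n : ℕ} (A : Matrix (Fin n) (Fin n) ℝ) : ℝ :=
  sSup {r | ∃ y : Fin n → ℝ, (∑ i, y i = 0) ∧ l2norm y = 1 ∧ r = l2norm (A.mulVec y)}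

open Topology Matrix

lemma l2norm_eq_norm_toLp {n : ℕ} (v : Fin n → ℝ) : l2norm v = ‖WithLp.toLp 2 v‖ := by
  simp [l2norm, EuclideanSpace.norm_eq]

lemma l2norm_nonneg {n : ℕ} (v : Fin n → ℝ) : 0 ≤ l2norm v := Real.sqrt_nonneg _

lemma l2norm_add_le {n : ℕ} (v w : Fin n → ℝ) : l2norm (v + w) ≤ l2norm v + l2norm w := by
  simpa only [l2norm_eq_norm_toLp, WithLp.toLp_add] using norm_add_le _ _

lemma l2norm_smul {n : ℕ} (c : ℝ) (v : Fin n → ℝ) : l2norm (c • v) = |c| * l2norm v := by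
  simp only [l2norm_eq_norm_toLp, WithLp.toLp_smul, norm_smul, Real.norm_eq_abs]

lemma norm_le_l2norm {n : ℕ} (v : Fin n → ℝ) : ‖v‖ ≤ l2norm v :=
  (pi_norm_le_iff_of_nonneg (l2norm_nonneg v)).2 fun i => by
    simpa [l2norm_eq_norm_toLp] using PiLp.norm_apply_le (WithLp.toLp 2 v) i

lemma continuous_l2norm {n : ℕ} : Continuous (l2norm : (Fin n → ℝ) → ℝ) := by
  simp only [funext l2norm_eq_norm_toLp]
  fun_prop

lemma l2norm_mulVec_le_opNorm_mul {n : ℕ} (A : Matrix (Fin n) (Fin n) ℝ) (v : Fin n → ℝ) :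
    l2norm (A *ᵥ v) ≤ ‖Matrix.toEuclideanCLM (𝕜 := ℝ) A‖ * l2norm v := by
  simpa [l2norm_eq_norm_toLp] using (Matrix.toEuclideanCLM (𝕜 := ℝ) A).le_opNorm (WithLp.toLp 2 v)

lemma l2norm_mulVec_le_sigma2_mul {n : ℕ} (A : Matrix (Fin n) (Fin n) ℝ) {y : Fin n → ℝ}
    (hy : ∑ i, y i = 0) : l2norm (A *ᵥ y) ≤ sigma2 A * l2norm y := by
  rcases (l2norm_nonneg y).eq_or_lt with hy0 | hpos
  · have : y = 0 := by simpa [l2norm_eq_norm_toLp] using hy0.symm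
    simp [this, l2norm]
  set u := (l2norm y)⁻¹ • y
  have hbdd : BddAbove {r | ∃ y : Fin n → ℝ, (∑ i, y i = 0) ∧ l2norm y = 1 ∧
      r = l2norm (A *ᵥ y)} := by
    refine ⟨‖Matrix.toEuclideanCLM (𝕜 := ℝ) A‖, ?_⟩
    rintro r ⟨z, -, hz, rfl⟩
    simpa [hz] using l2norm_mulVec_le_opNorm_mul A z
  have hu : l2norm (A *ᵥ u) ≤ sigma2 A := by
    refine le_csSup hbdd ⟨u, ?_, ?_, rfl⟩
    · simp [u, ← Finset.mul_sum, hy]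
    · rw [l2norm_smul, abs_of_pos (inv_pos.2 hpos), inv_mul_cancel₀ hpos.ne']
  have hAy : A *ᵥ y = l2norm y • A *ᵥ u := by
    rw [Matrix.mulVec_smul, smul_smul, mul_inv_cancel₀ hpos.ne', one_smul]
  rw [hAy, l2norm_smul, abs_of_pos hpos, mul_comm]
  exact mul_le_mul_of_nonneg_right hu hpos.le

section Stochastic

variable {ι R : Type*} [Fintype ι] [NonAssocSemiring R] {A : Matrix ι ι R}

lemma sum_mulVec_of_sum_col_eq_one (hcol : ∀ j, ∑ i, A i j = 1) (v : ι → R) :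
    ∑ i, (A *ᵥ v) i = ∑ i, v i := by
  simp only [mulVec, dotProduct]
  rw [Finset.sum_comm]
  simp [← Finset.sum_mul, hcol]

lemma mulVec_const_of_sum_row_eq_one (hrow : ∀ i, ∑ j, A i j = 1) (c : R) :
    A *ᵥ (fun _ => c) = fun _ => c := by
  ext i
  simp [mulVec, dotProduct, ← Finset.sum_mul, hrow]

end Stochastic

noncomputable def meanDeviation (n : ℕ) : (Fin n → ℝ) →ₗ[ℝ] Fin n → ℝ where
  toFun v := v - fun _ => (∑ i, v i) / n
  map_add' v w := by ext; simp [Finset.sum_add_distrib]; ring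
  map_smul' c v := by ext; simp [← Finset.mul_sum]; ring

lemma meanDeviation_apply {n : ℕ} (v : Fin n → ℝ) :
    meanDeviation n v = v - fun _ => (∑ i, v i) / n := rfl

lemma sum_meanDeviation {n : ℕ} (v : Fin n → ℝ) : ∑ i, meanDeviation n v i = 0 := by
  rcases n.eq_zero_or_pos with rfl | hn
  · simp
  · simp [meanDeviation_apply, Finset.sum_sub_distrib, mul_div_cancel₀, hn.ne']

lemma meanDeviation_mulVec {n : ℕ} {A : Matrix (Fin n) (Fin n) ℝ}
    (hrow : ∀ i, ∑ j, A i j = 1) (hcol : ∀ j, ∑ i, A i j = 1) (v : Fin n → ℝ) :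
    meanDeviation n (A *ᵥ v) = A *ᵥ meanDeviation n v := by
  rw [meanDeviation_apply, meanDeviation_apply, mulVec_sub, mulVec_const_of_sum_row_eq_one hrow,
    sum_mulVec_of_sum_col_eq_one hcol]

lemma sub_div_le_pow_mul_sub_div_of_le_mul_add {a : ℕ → ℝ} {lam c : ℝ} (h0 : 0 ≤ lam)
    (h1 : lam ≠ 1) (hrec : ∀ k, a (k + 1) ≤ lam * a k + c) (m : ℕ) :
    a m - c / (1 - lam) ≤ lam ^ m * (a 0 - c / (1 - lam)) := by
  have hfix : lam * (c / (1 - lam)) + c = c / (1 - lam) := by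
    field_simp [sub_ne_zero.2 h1.symm]; ring
  induction m with
  | zero => simp
  | succ m ih =>
    calc a (m + 1) - c / (1 - lam) ≤ lam * (a m - c / (1 - lam)) := by linarith [hrec m]
      _ ≤ lam ^ (m + 1) * (a 0 - c / (1 - lam)) := by
        rw [pow_succ', mul_assoc]; exact mul_le_mul_of_nonneg_left ih h0

lemma tendsto_zero_of_le_mul_add {a b : ℕ → ℝ} {lam : ℝ} (h0 : 0 ≤ lam) (h1 : lam < 1)
    (ha : ∀ k, 0 ≤ a k) (hrec : ∀ k, a (k + 1) ≤ lam * a k + b k)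
    (hb : Tendsto b atTop (𝓝 0)) : Tendsto a atTop (𝓝 0) := by
  refine tendsto_order.2 ⟨fun ε hε => .of_forall fun k => hε.trans_le (ha k), fun ε hε => ?_⟩
  -- Once `b ≤ c`, the tail is pulled towards `ε / 2`, the fixed point of `t ↦ lam * t + c`.
  set c := ε * (1 - lam) / 2
  have hc : c / (1 - lam) = ε / 2 := by
    simp only [c]; field_simp [(sub_pos.2 h1).ne']
  obtain ⟨N, hN⟩ := eventually_atTop.1 (hb.eventually (ge_mem_nhds (by positivity : 0 < c)))
  have hshift (m : ℕ) : a (N + m) - ε / 2 ≤ lam ^ m * (a N - ε / 2) := by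
    rw [← hc]
    refine sub_div_le_pow_mul_sub_div_of_le_mul_add (a := fun m => a (N + m)) h0 h1.ne
      (fun k => ?_) m
    rw [← add_assoc]
    linarith [hrec (N + k), hN (N + k) (by omega)]
  have hgeom : Tendsto (fun m => lam ^ m * (a N - ε / 2)) atTop (𝓝 0) := by
    simpa using (tendsto_pow_atTop_nhds_zero_of_lt_one h0 h1).mul_const (a N - ε / 2)
  obtain ⟨M, hM⟩ := eventually_atTop.1 (hgeom.eventually (gt_mem_nhds (half_pos hε)))
  refine eventually_atTop.2 ⟨N + M, fun k hk => ?_⟩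
  obtain ⟨m, rfl⟩ := Nat.exists_eq_add_of_le (le_of_add_le_left hk)
  linarith [hshift m, hM m (by omega)]

theorem perturbed_consensus_vanishing_general (n : ℕ)
    (A : ℕ → Matrix (Fin n) (Fin n) ℝ)
    (hrow : ∀ k i, ∑ j, A k i j = 1)
    (hcol : ∀ k j, ∑ i, A k i j = 1)
    (lam : ℝ) (hlam0 : 0 ≤ lam) (hlam1 : lam < 1)
    (hσ : ∀ k, sigma2 (A k) ≤ lam)
    (Δ x : ℕ → Fin n → ℝ)
    (hΔ : Tendsto Δ atTop (nhds 0))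
    (hx : ∀ k, x (k + 1) = (A k).mulVec (x k) + Δ k) :
    Tendsto (fun k => x k - fun _ => (∑ i, x k i) / n) atTop (nhds 0) := by
  set e := fun k => meanDeviation n (x k)
  have hrec (k : ℕ) : l2norm (e (k + 1)) ≤ lam * l2norm (e k) + l2norm (meanDeviation n (Δ k)) :=
    calc l2norm (e (k + 1)) = l2norm (A k *ᵥ e k + meanDeviation n (Δ k)) := by
          simp only [e, hx, map_add, meanDeviation_mulVec (hrow k) (hcol k)]
      _ ≤ sigma2 (A k) * l2norm (e k) + l2norm (meanDeviation n (Δ k)) :=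
          (l2norm_add_le _ _).trans <| by
            gcongr; exact l2norm_mulVec_le_sigma2_mul _ (sum_meanDeviation (x k))
      _ ≤ lam * l2norm (e k) + l2norm (meanDeviation n (Δ k)) := by
          gcongr; exacts [l2norm_nonneg _, hσ k]
  have hΔ' : Tendsto (fun k => l2norm (meanDeviation n (Δ k))) atTop (𝓝 0) := by
    refine ((continuous_l2norm.comp (meanDeviation n).continuous_of_finiteDimensional).tendsto' 0 0
      ?_).comp hΔ
    simp [l2norm]
  have he : Tendsto (fun k => l2norm (e k)) atTop (𝓝 0) :=
    tendsto_zero_of_le_mul_add hlam0 hlam1 (fun k => l2norm_nonneg _) hrec hΔ'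
  exact squeeze_zero_norm (fun k => norm_le_l2norm (e k)) he

theorem perturbed_consensus_vanishing (n : ℕ) (hn : 0 < n)
    (A : ℕ → Matrix (Fin n) (Fin n) ℝ)
    (hnonneg : ∀ k i j, 0 ≤ A k i j)
    (hrow : ∀ k i, ∑ j, A k i j = 1)
    (hcol : ∀ k j, ∑ i, A k i j = 1)
    (lam : ℝ) (hlam0 : 0 ≤ lam) (hlam1 : lam < 1)
    (hσ : ∀ k, sigma2 (A k) ≤ lam)
    (Δ x : ℕ → Fin n → ℝ)
    (hΔ : Tendsto Δ atTop (nhds 0))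
    (hx : ∀ k, x (k + 1) = (A k).mulVec (x k) + Δ k) :
    Tendsto (fun k => x k - fun _ => (∑ i, x k i) / n) atTop (nhds 0) :=
  perturbed_consensus_vanishing_general n A hrow hcol lam hlam0 hlam1 hσ Δ x hΔ hx
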